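/- arXiv:2201.12454 — 3 statements merged into one kernel-verified Lean document; each statement's English description precedes it below -/
import Mathlib

section
/- For vectors a, b ∈ {0,1}^d, the sum over i from 1 to d of d_H(f_A(a[i]), f_B(b[i])) equals 2d + 2·(number of indices i with a[i] = b[i] = 1). In particular this sum equals 2d if and only if a and b are orthogonal (inner product zero). -/
/-- Hamming distance between two length-4 bit vectors. -/
def hamming (a b : Fin 4 → Bool) : ℕ :=
  (Finset.univ.filter fun i => a i ≠ b i).card

/-- `f_A(0)=1100`, `f_A(1)=1111`. -/
def fA (x : Bool) : Fin 4 → Bool :=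
  if x then ![true, true, true, true] else ![true, true, false, false]

/-- `f_B(0)=0110`, `f_B(1)=0000`. -/
def fB (y : Bool) : Fin 4 → Bool :=
  if y then ![false, false, false, false] else ![false, true, true, false]

lemma hamming_eq (x y : Bool) :
    hamming (fA x) (fB y) = 2 + 2 * (if x = true ∧ y = true then 1 else 0) := by
  cases x <;> cases y <;> decide

/-- For `a, b ∈ {0,1}^d`, `∑ i, d_H(f_A(a[i]), f_B(b[i])) = 2d + 2·#{i | a[i]=b[i]=1}`;
in particular the sum equals `2d` iff `a` and `b` are orthogonal (`∑ i, a[i]·b[i] = 0`). -/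
theorem stmt1 (d : ℕ) (a b : Fin d → Bool) :
    (∑ i, hamming (fA (a i)) (fB (b i))) =
      2 * d + 2 * (Finset.univ.filter fun i => a i = true ∧ b i = true).card ∧
    ((∑ i, hamming (fA (a i)) (fB (b i))) = 2 * d ↔
      (∑ i, (a i).toNat * (b i).toNat) = 0) := by
  have h1 : (∑ i, hamming (fA (a i)) (fB (b i))) =
      2 * d + 2 * (Finset.univ.filter fun i => a i = true ∧ b i = true).card := by
    simp only [hamming_eq, Finset.sum_add_distrib, Finset.sum_const, Finset.card_univ,
      Fintype.card_fin, smul_eq_mul, ← Finset.mul_sum, Finset.card_filter]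
    ring
  refine ⟨h1, ?_⟩
  rw [h1]
  have h2 : (∑ i, (a i).toNat * (b i).toNat) =
      (Finset.univ.filter fun i => a i = true ∧ b i = true).card := by
    rw [Finset.card_filter]
    apply Finset.sum_congr rfl
    intro i _
    cases a i <;> cases b i <;> simp
  rw [h2]
  omega
end

section
/- In any directed graph, if every vertex on a walk W from vertex x back to vertex x has the property that every walk of length k−1 ending at that vertex matches the same string of labels (the implicit label), and x has implicit label S of length k, then the string of labels along W concatenated appropriately is periodic with period equal to the length of W; in particular, if the length of W is strictly less than k and S has no period equal to that length, no such closed walk exists. -/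
/-- A vertex `y` has (well-defined) implicit label `T` of length `k` if every walk of `k`
vertices ending at `y` matches `T`. -/
def ImplicitLabel {V A : Type*} (Adj : V → V → Prop) (L : V → A) (k : ℕ) (y : V)
    (T : Fin k → A) : Prop :=
  ∀ u : ℕ → V, (∀ i, i + 1 < k → Adj (u i) (u (i + 1))) → u (k - 1) = y →
    ∀ j, (h : j < k) → L (u j) = T ⟨j, h⟩

/-- If every vertex on a closed walk `w` of length `p` from `x` back to `x` has a well-defined
implicit label of length `k`, and `x` has implicit label `S`, then `S` is periodic with
period `p` (in particular, if `p < k` and `S` has no period `p`, no such closed walk exists). -/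
theorem stmt2 {V A : Type*} (Adj : V → V → Prop) (L : V → A) (k : ℕ) (hk : 1 ≤ k)
    (x : V) (S : Fin k → A) (p : ℕ) (hp : 1 ≤ p) (w : ℕ → V)
    (hwalk : ∀ i < p, Adj (w i) (w (i + 1)))
    (h0 : w 0 = x) (hend : w p = x)
    (hall : ∀ q ≤ p, ∃ T : Fin k → A, ImplicitLabel Adj L k (w q) T)
    (hx : ImplicitLabel Adj L k x S) :
    ∀ i : ℕ, ∀ h : i + p < k, S ⟨i, by omega⟩ = S ⟨i + p, h⟩ := by
  intro i h
  set r := (k - 1) % p with hr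
  have hrlt : r < p := Nat.mod_lt _ (by omega)
  set c := p - r with hc
  set u : ℕ → V := fun j => w ((j + c) % p) with hu
  -- adjacency along u
  have hadj : ∀ j, j + 1 < k → Adj (u j) (u (j + 1)) := by
    intro j _
    have e1 : (j + 1 + c) % p = ((j + c) % p + 1) % p := by
      rw [Nat.mod_add_mod]
      congr 1
      ring
    set m := (j + c) % p with hm
    have hmlt : m < p := Nat.mod_lt _ (by omega)
    show Adj (w m) (w ((j + 1 + c) % p))
    rw [e1]
    by_cases hcase : m + 1 < p
    · rw [Nat.mod_eq_of_lt hcase]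
      exact hwalk m hmlt
    · have hmp : m + 1 = p := by omega
      rw [hmp, Nat.mod_self]
      have := hwalk m hmlt
      rw [hmp] at this
      rwa [hend, ← h0] at this
  -- u ends at x
  have hend' : u (k - 1) = x := by
    have hdm := Nat.div_add_mod (k - 1) p
    have e2 : k - 1 + c = p * ((k - 1) / p) + p := by omega
    show w ((k - 1 + c) % p) = x
    rw [e2, Nat.add_mod, Nat.mul_mod_right, Nat.mod_self]
    simpa using h0
  -- u is p-periodic
  have hper : u (i + p) = u i := by
    show w ((i + p + c) % p) = w ((i + c) % p)
    congr 1
    rw [show i + p + c = i + c + p by ring, Nat.add_mod_right]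
  have h1 := hx u hadj hend' i (by omega)
  have h2 := hx u hadj hend' (i + p) h
  rw [← h1, ← h2, hper]
end

section
/- Let n ≥ 2, ℓ = ⌈log₂ n⌉, and for 0 ≤ i < n define enc(i) = (0^{2ℓ} 1)^{2ℓ} · bin(i), where bin(i) is the ℓ-bit binary encoding of i. Then for any distinct i, j ∈ [0, n−1] and any cyclic shift s with 1 ≤ s < 2ℓ, the Hamming distance between enc(i) and the string obtained by shifting enc(j) by s positions (restricted to their overlap) is at least 2ℓ − 1. -/
/-- The `ℓ`-bit binary encoding of `i` (most significant bit first). -/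
def binEnc (ℓ i : ℕ) : List Bool :=
  (List.range ℓ).map fun p => i.testBit (ℓ - 1 - p)

/-- `enc(i) = (0^{2ℓ} 1)^{2ℓ} · bin(i)`. -/
def enc (ℓ i : ℕ) : List Bool :=
  (List.replicate (2 * ℓ) (List.replicate (2 * ℓ) false ++ [true])).flatten ++ binEnc ℓ i

/-- Hamming distance between two bit strings, restricted to their overlap. -/
def hammingList (a b : List Bool) : ℕ :=
  (a.zip b).countP fun p => p.1 != p.2

lemma countP_ge_card {α : Type} (p : α → Bool) (l : List α) (S : Finset ℕ)
    (h : ∀ k ∈ S, ∃ hk : k < l.length, p (l[k]'hk)) :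
    S.card ≤ l.countP p := by
  classical
  have h1 : l.countP p = ((List.finRange l.length).filter (fun i => p (l.get i))).length := by
    conv_lhs => rw [← List.map_get_finRange l]
    rw [List.countP_map, List.countP_eq_length_filter]
    rfl
  have hnd : ((List.finRange l.length).filter (fun i => p (l.get i))).Nodup :=
    (List.nodup_finRange _).filter _
  rw [h1, ← List.toFinset_card_of_nodup hnd]
  have : S ⊆ (((List.finRange l.length).filter (fun i => p (l.get i))).toFinset).image Fin.val := by
    intro k hk
    obtain ⟨hkl, hpk⟩ := h k hk
    simp only [Finset.mem_image, List.mem_toFinset, List.mem_filter, List.mem_finRange]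
    exact ⟨⟨k, hkl⟩, ⟨trivial, hpk⟩, rfl⟩
  calc S.card ≤ _ := Finset.card_le_card this
    _ ≤ _ := Finset.card_image_le

lemma getElem_flatten_replicate {α : Type} (B : List α) (hB : 0 < B.length) :
    ∀ (n m : ℕ) (hm : m < n * B.length),
    ((List.replicate n B).flatten)[m]'(by simpa [List.length_flatten] using hm) =
      B[m % B.length]'(Nat.mod_lt _ hB) := by
  intro n
  induction n with
  | zero => intro m hm; omega
  | succ n ih =>
    intro m hm
    simp only [List.replicate_succ, List.flatten_cons]
    by_cases h : m < B.length
    · rw [List.getElem_append_left h]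
      congr 1
      exact (Nat.mod_eq_of_lt h).symm
    · push_neg at h
      rw [List.getElem_append_right h]
      have := ih (m - B.length) (by rw [Nat.succ_mul] at hm; omega)
      rw [this]
      congr 1
      conv_rhs => rw [show m = (m - B.length) + B.length by omega]
      rw [Nat.add_mod_right]

lemma enc_length (ℓ x : ℕ) : (enc ℓ x).length = 2 * ℓ * (2 * ℓ + 1) + ℓ := by
  simp [enc, binEnc, List.length_flatten]

lemma enc_getElem (ℓ x m : ℕ) (hm : m < 2 * ℓ * (2 * ℓ + 1)) :
    (enc ℓ x)[m]'(by rw [enc_length]; omega) = (m % (2 * ℓ + 1) == 2 * ℓ) := by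
  have hlen : ((List.replicate (2 * ℓ) (List.replicate (2 * ℓ) false ++ [true])).flatten).length
      = 2 * ℓ * (2 * ℓ + 1) := by
    simp [List.length_flatten]
  simp only [enc]
  rw [List.getElem_append_left (by rw [hlen]; exact hm)]
  have hB : 0 < (List.replicate (2 * ℓ) false ++ [true]).length := by simp
  have := getElem_flatten_replicate (List.replicate (2 * ℓ) false ++ [true]) hB
    (2 * ℓ) m (by simpa using hm)
  rw [this]
  have hBlen : (List.replicate (2 * ℓ) false ++ [true]).length = 2 * ℓ + 1 := by simp
  have hr : m % (List.replicate (2 * ℓ) false ++ [true]).length = m % (2 * ℓ + 1) := by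
    rw [hBlen]
  set r := m % (2 * ℓ + 1) with hrdef
  have hrlt : r < 2 * ℓ + 1 := Nat.mod_lt _ (by omega)
  by_cases hc : r < 2 * ℓ
  · have : (List.replicate (2 * ℓ) false ++ [true])[m % (List.replicate (2 * ℓ) false ++ [true]).length]'(Nat.mod_lt _ hB) = false := by
      rw [List.getElem_of_eq rfl]
      · simp only [hr]
        rw [List.getElem_append_left (by simpa using hc)]
        simp
    rw [this]
    have hne : r ≠ 2 * ℓ := by omega
    simp [hne]
  · have hre : r = 2 * ℓ := by omega
    have : (List.replicate (2 * ℓ) false ++ [true])[m % (List.replicate (2 * ℓ) false ++ [true]).length]'(Nat.mod_lt _ hB) = true := by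
      simp only [hr, hre]
      rw [List.getElem_append_right (by simp)]
      simp
    rw [this]
    simp [hre]

/-- For `n ≥ 2`, `ℓ = ⌈log₂ n⌉`, distinct `i, j < n` and any shift `1 ≤ s < 2ℓ`, the Hamming
distance between `enc(i)` shifted by `s` and `enc(j)` (restricted to the overlap) is at least
`2ℓ − 1`. -/
theorem stmt5 (n : ℕ) (hn : 2 ≤ n) (i j : ℕ) (hi : i < n) (hj : j < n) (hij : i ≠ j)
    (s : ℕ) (hs1 : 1 ≤ s) (hs2 : s < 2 * Nat.clog 2 n) :
    2 * Nat.clog 2 n - 1 ≤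
      hammingList ((enc (Nat.clog 2 n) i).drop s) (enc (Nat.clog 2 n) j) := by
  set ℓ := Nat.clog 2 n with hl
  have hl1 : 1 ≤ ℓ := by
    have := Nat.clog_pos (le_refl 2) hn
    omega
  rw [hammingList]
  -- the set of mismatch positions
  set S : Finset ℕ := (Finset.range (2 * ℓ - 1)).image (fun k => k * (2 * ℓ + 1) + 2 * ℓ) with hS
  have hScard : S.card = 2 * ℓ - 1 := by
    rw [hS, Finset.card_image_of_injective _ (fun a b hab => Nat.eq_of_mul_eq_mul_right (by omega) (Nat.add_right_cancel hab))]
    simp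
  rw [← hScard]
  apply countP_ge_card
  intro m hm
  rw [hS] at hm
  simp only [Finset.mem_image, Finset.mem_range] at hm
  obtain ⟨k, hk, rfl⟩ := hm
  have hmul : (k + 2) * (2 * ℓ + 1) ≤ 2 * ℓ * (2 * ℓ + 1) := Nat.mul_le_mul_right _ (by omega)
  have hexp : (k + 2) * (2 * ℓ + 1) = k * (2 * ℓ + 1) + 4 * ℓ + 2 := by ring
  have hmsP : s + (k * (2 * ℓ + 1) + 2 * ℓ) < 2 * ℓ * (2 * ℓ + 1) := by linarith
  have hmP : k * (2 * ℓ + 1) + 2 * ℓ < 2 * ℓ * (2 * ℓ + 1) := by linarith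
  have hlen1 : (enc ℓ i).length = 2 * ℓ * (2 * ℓ + 1) + ℓ := enc_length ℓ i
  have hlen2 : (enc ℓ j).length = 2 * ℓ * (2 * ℓ + 1) + ℓ := enc_length ℓ j
  have hmlt : k * (2 * ℓ + 1) + 2 * ℓ < (((enc ℓ i).drop s).zip (enc ℓ j)).length := by
    rw [List.length_zip, List.length_drop, hlen1, hlen2]
    omega
  refine ⟨hmlt, ?_⟩
  rw [List.getElem_zip]
  have hd : ((enc ℓ i).drop s)[k * (2 * ℓ + 1) + 2 * ℓ]'(by rw [List.length_drop, hlen1]; omega)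
      = (enc ℓ i)[s + (k * (2 * ℓ + 1) + 2 * ℓ)]'(by rw [hlen1]; omega) :=
    List.getElem_drop ..
  rw [hd, enc_getElem ℓ i _ hmsP, enc_getElem ℓ j _ hmP]
  have h1 : (s + (k * (2 * ℓ + 1) + 2 * ℓ)) % (2 * ℓ + 1) = s - 1 := by
    have : s + (k * (2 * ℓ + 1) + 2 * ℓ) = (s - 1) + (k + 1) * (2 * ℓ + 1) := by ring_nf; omega
    rw [this, Nat.add_mul_mod_self_right, Nat.mod_eq_of_lt (by omega)]
  have h2 : (k * (2 * ℓ + 1) + 2 * ℓ) % (2 * ℓ + 1) = 2 * ℓ := by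
    rw [Nat.add_comm, Nat.add_mul_mod_self_right, Nat.mod_eq_of_lt (by omega)]
  rw [h1, h2]
  simp only [beq_iff_eq]
  have : ¬ (s - 1 = 2 * ℓ) := by omega
  simp [this]
end
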